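/- Let β ∈ (0,1) and σ ∈ (0,1/2). Let u ∈ ℝⁿ with Θ(u) > 0 and let d be the modified Newton direction at u. Then there exists a finite index l ∈ ℕ such that the Armijo inequality Θ(u + βˡ·d) ≤ (1 − 2σβˡ)·Θ(u) holds. -/

import Mathlib

open scoped RealInnerProductSpace
open Filter Topology

noncomputable section

abbrev Euc (n : ℕ) := EuclideanSpace ℝ (Fin n)

variable {n : ℕ}

/-- Componentwise soft-thresholding operator `(S_{γw}(v))_k = sgn(v_k)·max(|v_k| − γw_k, 0)`. -/
def soft (γ : ℝ) (w : Fin n → ℝ) (v : Euc n) : Euc n :=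
  WithLp.toLp 2 (fun k => Real.sign (v k) * max (|v k| - γ * w k) 0)

/-- The map `F(u) = u − S_{γw}(u − γ∇g(u))`. -/
def Fm (g : Euc n → ℝ) (γ : ℝ) (w : Fin n → ℝ) (u : Euc n) : Euc n :=
  u - soft γ w (u - γ • gradient g u)

/-- The merit functional `Θ(u) = ‖F(u)‖₂²`. -/
def Th (g : Euc n → ℝ) (γ : ℝ) (w : Fin n → ℝ) (u : Euc n) : ℝ :=
  ‖Fm g γ w u‖ ^ 2

/-- The Hessian of `g` at `u`, applied to `d`: `∇²g(u)d`. -/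
def hess (g : Euc n → ℝ) (u d : Euc n) : Euc n :=
  fderiv ℝ (gradient g) u d

/-- Standing assumptions on `g`: twice continuously differentiable, Lipschitz continuous
second derivative, and uniform bounds `c₁‖h‖² ≤ ⟨∇²g(u)h, h⟩ ≤ c₂‖h‖²`. -/
structure Assump (n : ℕ) (g : Euc n → ℝ) (c₁ c₂ : ℝ) : Prop where
  contDiff : ContDiff ℝ 2 g
  lipHess : ∃ L : NNReal, LipschitzWith L fun u => fderiv ℝ (gradient g) u
  c1_pos : 0 < c₁
  c1_le_c2 : c₁ ≤ c₂
  lower : ∀ u h : Euc n, c₁ * ‖h‖ ^ 2 ≤ ⟪hess g u h, h⟫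
  upper : ∀ u h : Euc n, ⟪hess g u h, h⟫ ≤ c₂ * ‖h‖ ^ 2

/-- `A⁺(u)`. -/
def Ap (g : Euc n → ℝ) (γ : ℝ) (w : Fin n → ℝ) (u : Euc n) : Set (Fin n) :=
  {k | γ * gradient g u k + γ * w k < u k}

/-- `A⁻(u)`. -/
def Am (g : Euc n → ℝ) (γ : ℝ) (w : Fin n → ℝ) (u : Euc n) : Set (Fin n) :=
  {k | u k < γ * gradient g u k - γ * w k}

/-- `A(u) = A⁺(u) ∪ A⁻(u)`. -/
def Aset (g : Euc n → ℝ) (γ : ℝ) (w : Fin n → ℝ) (u : Euc n) : Set (Fin n) :=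
  Ap g γ w u ∪ Am g γ w u

/-- `I°(u)`. -/
def Iz (g : Euc n → ℝ) (γ : ℝ) (w : Fin n → ℝ) (u : Euc n) : Set (Fin n) :=
  {k | γ * gradient g u k - γ * w k < u k ∧ u k < γ * gradient g u k + γ * w k}

/-- `I⁺(u)`. -/
def Ipl (g : Euc n → ℝ) (γ : ℝ) (w : Fin n → ℝ) (u : Euc n) : Set (Fin n) :=
  {k | u k = γ * gradient g u k + γ * w k}

/-- `I⁻(u)`. -/
def Imi (g : Euc n → ℝ) (γ : ℝ) (w : Fin n → ℝ) (u : Euc n) : Set (Fin n) :=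
  {k | u k = γ * gradient g u k - γ * w k}

/-- `A⁺₊(u)`. -/
def App (g : Euc n → ℝ) (γ : ℝ) (w : Fin n → ℝ) (u : Euc n) : Set (Fin n) :=
  {k | γ * gradient g u k + γ * w k < u k ∧ u k < 0}

/-- `A⁻₋(u)`. -/
def Amm (g : Euc n → ℝ) (γ : ℝ) (w : Fin n → ℝ) (u : Euc n) : Set (Fin n) :=
  {k | 0 < u k ∧ u k < γ * gradient g u k - γ * w k}

/-- `I°₊(u)`. -/
def Izp (g : Euc n → ℝ) (γ : ℝ) (w : Fin n → ℝ) (u : Euc n) : Set (Fin n) :=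
  {k | γ * gradient g u k - γ * w k < u k ∧ u k < γ * gradient g u k + γ * w k ∧
    γ * gradient g u k + γ * w k < 0}

/-- `I°₋(u)`. -/
def Izm (g : Euc n → ℝ) (γ : ℝ) (w : Fin n → ℝ) (u : Euc n) : Set (Fin n) :=
  {k | 0 < γ * gradient g u k - γ * w k ∧ γ * gradient g u k - γ * w k < u k ∧
    u k < γ * gradient g u k + γ * w k}

/-- `Ā⁺(u) = A⁺(u) \ A⁺₊(u)`. -/
def ApBar (g : Euc n → ℝ) (γ : ℝ) (w : Fin n → ℝ) (u : Euc n) : Set (Fin n) :=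
  Ap g γ w u \ App g γ w u

/-- `Ā⁻(u) = A⁻(u) \ A⁻₋(u)`. -/
def AmBar (g : Euc n → ℝ) (γ : ℝ) (w : Fin n → ℝ) (u : Euc n) : Set (Fin n) :=
  Am g γ w u \ Amm g γ w u

/-- `Ā(u) = Ā⁺(u) ∪ Ā⁻(u)`. -/
def ABar (g : Euc n → ℝ) (γ : ℝ) (w : Fin n → ℝ) (u : Euc n) : Set (Fin n) :=
  ApBar g γ w u ∪ AmBar g γ w u

/-- `Ī°(u) = I°(u) \ (I°₊(u) ∪ I°₋(u))`. -/
def IzBar (g : Euc n → ℝ) (γ : ℝ) (w : Fin n → ℝ) (u : Euc n) : Set (Fin n) :=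
  Iz g γ w u \ (Izp g γ w u ∪ Izm g γ w u)

/-- `Ī⁺(u) = I⁺(u) ∪ A⁺₊(u) ∪ I°₊(u)`. -/
def IplBar (g : Euc n → ℝ) (γ : ℝ) (w : Fin n → ℝ) (u : Euc n) : Set (Fin n) :=
  Ipl g γ w u ∪ App g γ w u ∪ Izp g γ w u

/-- `Ī⁻(u) = I⁻(u) ∪ A⁻₋(u) ∪ I°₋(u)`. -/
def ImiBar (g : Euc n → ℝ) (γ : ℝ) (w : Fin n → ℝ) (u : Euc n) : Set (Fin n) :=
  Imi g γ w u ∪ Amm g γ w u ∪ Izm g γ w u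

/-- `d` is a modified Newton direction at `u`. -/
def IsModDir (g : Euc n → ℝ) (γ : ℝ) (w : Fin n → ℝ) (u d : Euc n) : Prop :=
  (∀ k ∈ ABar g γ w u, γ * hess g u d k = - Fm g γ w u k) ∧
  (∀ k ∈ IzBar g γ w u, d k = - u k) ∧
  (∀ k ∈ IplBar g γ w u, 0 ≤ d k + u k ∧ 0 ≤ γ * hess g u d k + Fm g γ w u k ∧
    (d k + u k) * (γ * hess g u d k + Fm g γ w u k) = 0) ∧
  (∀ k ∈ ImiBar g γ w u, d k + u k ≤ 0 ∧ γ * hess g u d k + Fm g γ w u k ≤ 0 ∧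
    (d k + u k) * (γ * hess g u d k + Fm g γ w u k) = 0)

/-- `d` is a B-Newton direction at `u` (unmodified index sets). -/
def IsBDir (g : Euc n → ℝ) (γ : ℝ) (w : Fin n → ℝ) (u d : Euc n) : Prop :=
  (∀ k ∈ Aset g γ w u, γ * hess g u d k = - Fm g γ w u k) ∧
  (∀ k ∈ Iz g γ w u, d k = - u k) ∧
  (∀ k ∈ Ipl g γ w u, 0 ≤ d k + u k ∧ 0 ≤ γ * hess g u d k + Fm g γ w u k ∧
    (d k + u k) * (γ * hess g u d k + Fm g γ w u k) = 0) ∧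
  (∀ k ∈ Imi g γ w u, d k + u k ≤ 0 ∧ γ * hess g u d k + Fm g γ w u k ≤ 0 ∧
    (d k + u k) * (γ * hess g u d k + Fm g γ w u k) = 0)

/-- `t = β^l` where `l` is the smallest nonnegative integer satisfying the Armijo inequality. -/
def ArmijoStepsize (g : Euc n → ℝ) (γ : ℝ) (w : Fin n → ℝ) (β σ : ℝ) (u d : Euc n)
    (t : ℝ) : Prop :=
  ∃ l : ℕ, t = β ^ l ∧
    Th g γ w (u + (β ^ l) • d) ≤ (1 - 2 * σ * β ^ l) * Th g γ w u ∧
    ∀ l' < l, ¬ (Th g γ w (u + (β ^ l') • d) ≤ (1 - 2 * σ * β ^ l') * Th g γ w u)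

/-- The modified B-semismooth Newton iteration with Armijo damping. -/
def ModIter (g : Euc n → ℝ) (γ : ℝ) (w : Fin n → ℝ) (β σ : ℝ)
    (useq dseq : ℕ → Euc n) (tseq : ℕ → ℝ) : Prop :=
  (∀ j, IsModDir g γ w (useq j) (dseq j)) ∧
  (∀ j, ArmijoStepsize g γ w β σ (useq j) (dseq j) (tseq j)) ∧
  (∀ j, useq (j + 1) = useq j + tseq j • dseq j)

/-- The B-semismooth Newton iteration (unmodified index sets) with Armijo damping. -/
def BIter (g : Euc n → ℝ) (γ : ℝ) (w : Fin n → ℝ) (β σ : ℝ)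
    (useq dseq : ℕ → Euc n) (tseq : ℕ → ℝ) : Prop :=
  (∀ j, IsBDir g γ w (useq j) (dseq j)) ∧
  (∀ j, ArmijoStepsize g γ w β σ (useq j) (dseq j) (tseq j)) ∧
  (∀ j, useq (j + 1) = useq j + tseq j • dseq j)

/-!
Each coordinate of `F` is a clamp: `F_k(x)` is `x_k` projected onto the interval of radius
`γ w_k` around `γ ∇g(x)_k`. Along `u + t d`, replacing `∇g(u + t d)` by its linearisation
`∇g(u) + t ∇²g(u) d` moves that interval by `o(t)`, and the clamp is 1-Lipschitz in the centre.
The linearised clamp is at most `(1 - t) |F_k(u)|` in absolute value for small `t > 0`: on `Ā`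
and `Ī°` the coordinate stays in the same regime and contracts exactly, while on `Ī⁺` and `Ī⁻`
complementarity and the sign restrictions built into the modified index sets do the job.
Hence `‖F(u + t d)‖ ≤ (1 - t) ‖F(u)‖ + o(t)`, so `Θ(u + t d) ≤ (1 - 2σt) Θ(u)` for all small
`t` because `σ < 1/2`, and `β^l → 0⁺`.
-/

def clamp (q c x : ℝ) : ℝ := max (min x (q + c)) (q - c)

section Clamp

variable {q c x : ℝ}

lemma clamp_eq_min (h : q - c ≤ x) (hc : 0 ≤ c) : clamp q c x = min x (q + c) :=
  max_eq_left (le_min h (by linarith))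

lemma clamp_eq_add (h : q + c ≤ x) (hc : 0 ≤ c) : clamp q c x = q + c := by
  rw [clamp_eq_min (by linarith) hc, min_eq_right h]

lemma clamp_eq_self (h₁ : q - c ≤ x) (h₂ : x ≤ q + c) : clamp q c x = x := by
  rw [clamp, min_eq_left h₂, max_eq_left h₁]

lemma clamp_neg (hc : 0 ≤ c) : clamp (-q) c (-x) = -clamp q c x := by
  simp only [clamp, min_def, max_def]
  split_ifs <;> linarith

lemma abs_clamp_sub_clamp_le (a b c x : ℝ) : |clamp a c x - clamp b c x| ≤ |a - b| := by
  refine (abs_max_sub_max_le_max _ _ _ _).trans (max_le ?_ (by rw [sub_sub_sub_cancel_right]))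
  exact (abs_min_sub_min_le_max _ _ _ _).trans (max_le (by simp) (by rw [add_sub_add_right_eq_sub]))

lemma sub_sign_mul_max_eq_clamp (hc : 0 ≤ c) :
    x - Real.sign (x - q) * max (|x - q| - c) 0 = clamp q c x := by
  rcases lt_trichotomy (x - q) 0 with h | h | h
  · rw [Real.sign_of_neg h, abs_of_neg h]
    rcases le_or_gt (-(x - q)) c with h' | h'
    · rw [max_eq_right (by linarith), clamp_eq_self (by linarith) (by linarith)]; ring
    · rw [max_eq_left (by linarith), clamp, min_eq_left (by linarith), max_eq_right (by linarith)]
      ring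
  · rw [h, Real.sign_zero, clamp_eq_self (by linarith) (by linarith)]; ring
  · rw [Real.sign_of_pos h, abs_of_pos h]
    rcases le_or_gt (x - q) c with h' | h'
    · rw [max_eq_right (by linarith), clamp_eq_self (by linarith) (by linarith)]; ring
    · rw [max_eq_left (by linarith), clamp_eq_add (by linarith) hc]; ring

end Clamp

lemma eventually_add_mul_lt_add_mul {x y : ℝ} (a b : ℝ) (h : x < y) :
    ∀ᶠ t in 𝓝[>] (0 : ℝ), x + t * a < y + t * b := by
  have hx : Tendsto (fun t : ℝ => x + t * a) (𝓝 0) (𝓝 x) :=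
    (by fun_prop : Continuous fun t : ℝ => x + t * a).tendsto' 0 x (by simp)
  have hy : Tendsto (fun t : ℝ => y + t * b) (𝓝 0) (𝓝 y) :=
    (by fun_prop : Continuous fun t : ℝ => y + t * b).tendsto' 0 y (by simp)
  exact nhdsWithin_le_nhds (hx.eventually_lt hy h)

section LinearizedClamp

variable {p q c δ m : ℝ}

lemma eventually_abs_clamp_le_of_add_lt (hc : 0 ≤ c) (hp : q + c < p)
    (hm : m = -clamp q c p) :
    ∀ᶠ t in 𝓝[>] 0, |clamp (q + t * m) c (p + t * δ)| ≤ (1 - t) * |clamp q c p| := by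
  rw [clamp_eq_add hp.le hc] at hm ⊢
  filter_upwards [eventually_add_mul_lt_add_mul m δ hp, Ioo_mem_nhdsGT one_pos]
    with t ht ⟨_, ht1⟩
  rw [clamp_eq_add (by linarith) hc, show q + t * m + c = (1 - t) * (q + c) by rw [hm]; ring,
    abs_mul, abs_of_pos (sub_pos.2 ht1)]

lemma eventually_abs_clamp_le_of_lt_sub (hc : 0 ≤ c) (hp : p < q - c)
    (hm : m = -clamp q c p) :
    ∀ᶠ t in 𝓝[>] 0, |clamp (q + t * m) c (p + t * δ)| ≤ (1 - t) * |clamp q c p| := by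
  have hneg := eventually_abs_clamp_le_of_add_lt (q := -q) (p := -p) (m := -m) (δ := -δ) hc
    (by linarith) (by rw [clamp_neg hc, hm])
  filter_upwards [hneg] with t ht
  rwa [show -q + t * -m = -(q + t * m) by ring, show -p + t * -δ = -(p + t * δ) by ring,
    clamp_neg hc, clamp_neg hc, abs_neg, abs_neg] at ht

lemma eventually_abs_clamp_le_of_mem_Ioo (hp₁ : q - c < p) (hp₂ : p < q + c) (hδ : δ = -p) :
    ∀ᶠ t in 𝓝[>] 0, |clamp (q + t * m) c (p + t * δ)| ≤ (1 - t) * |clamp q c p| := by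
  filter_upwards [eventually_add_mul_lt_add_mul m δ hp₁, eventually_add_mul_lt_add_mul δ m hp₂,
    Ioo_mem_nhdsGT one_pos] with t ht₁ ht₂ ⟨_, ht1⟩
  rw [clamp_eq_self hp₁.le hp₂.le, clamp_eq_self (by linarith) (by linarith),
    show p + t * δ = (1 - t) * p by rw [hδ]; ring, abs_mul, abs_of_pos (sub_pos.2 ht1)]

-- With `q - c < p`, the three alternatives of `hsign` are the coordinates of `I⁺`, `A⁺₊` and `I°₊`.
lemma eventually_abs_clamp_le_of_complementarity_upper (hc : 0 ≤ c) (hp : q - c < p)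
    (hsign : p = q + c ∨ (p ≤ 0 ∧ q + c ≤ 0)) (hδ : 0 ≤ δ + p) (hm : 0 ≤ m + clamp q c p)
    (hcompl : (δ + p) * (m + clamp q c p) = 0) :
    ∀ᶠ t in 𝓝[>] 0, |clamp (q + t * m) c (p + t * δ)| ≤ (1 - t) * |clamp q c p| := by
  set F := clamp q c p
  have hF : F = min p (q + c) := clamp_eq_min hp.le hc
  have hFp : F ≤ p := hF ▸ min_le_left _ _
  have hFq : F ≤ q + c := hF ▸ min_le_right _ _
  filter_upwards [eventually_add_mul_lt_add_mul m δ hp,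
    Ioo_mem_nhdsGT (by norm_num : (0 : ℝ) < 1 / 2)] with t ht ⟨ht0, ht1⟩
  rw [clamp_eq_min (by linarith) hc, abs_le]
  have hFabs : (1 - t) * F ≤ (1 - t) * |F| := by gcongr; exacts [by linarith, le_abs_self F]
  have hpF : p ≤ |F| := by
    rcases hsign with hs | hs
    · rw [hF, hs, min_self]; exact le_abs_self _
    · exact hs.1.trans (abs_nonneg F)
  have hqF : q + c = F ∨ q + c ≤ 0 := by
    rcases hsign with hs | hs
    · rw [hF, hs, min_self]; exact Or.inl rfl
    · exact Or.inr hs.2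
  constructor
  · refine le_min ?_ ?_ <;> nlinarith [neg_abs_le F]
  · rcases mul_eq_zero.1 hcompl with h | h
    · calc min (p + t * δ) (q + t * m + c) ≤ p + t * δ := min_le_left _ _
        _ = (1 - t) * p := by rw [show δ = -p by linarith]; ring
        _ ≤ (1 - t) * |F| := by gcongr; linarith
    · calc min (p + t * δ) (q + t * m + c) ≤ q + t * m + c := min_le_right _ _
        _ = q + c - t * F := by rw [show m = -F by linarith]; ring
        _ ≤ (1 - t) * |F| := by
          rcases hqF with hs | hs
          · rw [hs]; linarith
          · nlinarith [neg_abs_le F, abs_nonneg F]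

lemma eventually_abs_clamp_le_of_complementarity_lower (hc : 0 ≤ c) (hp : p < q + c)
    (hsign : p = q - c ∨ (0 ≤ p ∧ 0 ≤ q - c)) (hδ : δ + p ≤ 0) (hm : m + clamp q c p ≤ 0)
    (hcompl : (δ + p) * (m + clamp q c p) = 0) :
    ∀ᶠ t in 𝓝[>] 0, |clamp (q + t * m) c (p + t * δ)| ≤ (1 - t) * |clamp q c p| := by
  have hneg := eventually_abs_clamp_le_of_complementarity_upper (q := -q) (p := -p) (m := -m)
    (δ := -δ) hc (by linarith) (hsign.imp (fun h => by linarith)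
      fun h => ⟨by linarith, by linarith⟩) (by linarith) (by rw [clamp_neg hc]; linarith)
    (by rw [clamp_neg hc, ← hcompl]; ring)
  filter_upwards [hneg] with t ht
  rwa [show -q + t * -m = -(q + t * m) by ring, show -p + t * -δ = -(p + t * δ) by ring,
    clamp_neg hc, clamp_neg hc, abs_neg, abs_neg] at ht

end LinearizedClamp

lemma EuclideanSpace.norm_le_norm_of_abs_le {ι : Type*} [Fintype ι] {x y : EuclideanSpace ℝ ι}
    (h : ∀ i, |x i| ≤ |y i|) : ‖x‖ ≤ ‖y‖ := by
  rw [EuclideanSpace.norm_eq, EuclideanSpace.norm_eq]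
  gcongr with i
  simpa only [Real.norm_eq_abs] using h i

lemma ContDiff.hasDerivAt_gradient_line {E : Type*} [NormedAddCommGroup E]
    [InnerProductSpace ℝ E] [CompleteSpace E] {g : E → ℝ} (hg : ContDiff ℝ 2 g) (u d : E) :
    HasDerivAt (fun t : ℝ => gradient g (u + t • d)) (fderiv ℝ (gradient g) u d) 0 := by
  have hgrad : ContDiff ℝ 1 (gradient g) :=
    (InnerProductSpace.toDual ℝ E).symm.contDiff.comp (hg.fderiv_right (by norm_num))
  have hline : HasDerivAt (fun t : ℝ => u + t • d) d 0 := by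
    simpa using ((hasDerivAt_id (0 : ℝ)).smul_const d).const_add u
  have hgu : HasFDerivAt (gradient g) (fderiv ℝ (gradient g) u) (u + (0 : ℝ) • d) := by
    simpa using (hgrad.differentiable one_ne_zero u).hasFDerivAt
  exact hgu.comp_hasDerivAt 0 hline

lemma eventually_sq_le_of_le_one_sub_mul_add_isLittleO {φ ρ : ℝ → ℝ} {a σ : ℝ} (ha : 0 < a)
    (hσ : σ < 1 / 2) (hφ₀ : ∀ t, 0 ≤ φ t) (hφ : ∀ᶠ t in 𝓝[>] 0, φ t ≤ (1 - t) * a + ρ t)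
    (hρ : ρ =o[𝓝[>] 0] id) :
    ∀ᶠ t in 𝓝[>] 0, φ t ^ 2 ≤ (1 - 2 * σ * t) * a ^ 2 := by
  filter_upwards [hφ, hρ.def (half_pos ha), Ioo_mem_nhdsGT (by linarith : 0 < 4 * (1 - 2 * σ))]
    with t hφt hρt ⟨ht₀, ht⟩
  rw [Real.norm_eq_abs, id, Real.norm_eq_abs, abs_of_pos ht₀] at hρt
  have hφt' : φ t ≤ (1 - t / 2) * a := by linarith [le_abs_self (ρ t)]
  calc φ t ^ 2 ≤ ((1 - t / 2) * a) ^ 2 := pow_le_pow_left₀ (hφ₀ t) hφt' 2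
    _ ≤ (1 - 2 * σ * t) * a ^ 2 := by
      nlinarith [mul_nonneg (mul_nonneg ht₀.le (by linarith : 0 ≤ 1 - 2 * σ - t / 4)) (sq_nonneg a)]

section ModifiedNewton

variable {g : Euc n → ℝ} {γ : ℝ} {w : Fin n → ℝ} {u d : Euc n}

lemma Fm_apply (g : Euc n → ℝ) (x : Euc n) (k : Fin n) (hc : 0 ≤ γ * w k) :
    Fm g γ w x k = clamp (γ * gradient g x k) (γ * w k) (x k) := by
  simpa only [Fm, soft, PiLp.sub_apply, PiLp.smul_apply, smul_eq_mul] using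
    sub_sign_mul_max_eq_clamp hc

lemma IsModDir.eventually_abs_clamp_le (hd : IsModDir g γ w u d) {k : Fin n}
    (hc : 0 < γ * w k) :
    ∀ᶠ t in 𝓝[>] 0, |clamp (γ * gradient g u k + t * (γ * hess g u d k)) (γ * w k)
      (u k + t * d k)| ≤ (1 - t) * |Fm g γ w u k| := by
  obtain ⟨hA, hI, hIp, hIm⟩ := hd
  have hA := hA k
  have hI := hI k
  have hIp := hIp k
  have hIm := hIm k
  rw [Fm_apply g u k hc.le] at hA hIp hIm ⊢
  rcases lt_trichotomy (u k) (γ * gradient g u k - γ * w k) with hlo | hlo | hlo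
  · by_cases hp : u k ≤ 0
    · exact eventually_abs_clamp_le_of_lt_sub hc.le hlo
        (hA (Or.inr ⟨hlo, fun h => absurd h.1 (not_lt.2 hp)⟩))
    · obtain ⟨h₁, h₂, h₃⟩ := hIm (Or.inl (Or.inr ⟨lt_of_not_ge hp, hlo⟩))
      exact eventually_abs_clamp_le_of_complementarity_lower hc.le (by linarith)
        (Or.inr ⟨by linarith, by linarith⟩) h₁ h₂ h₃
  · obtain ⟨h₁, h₂, h₃⟩ := hIm (Or.inl (Or.inl hlo))
    exact eventually_abs_clamp_le_of_complementarity_lower hc.le (by linarith) (Or.inl hlo)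
      h₁ h₂ h₃
  rcases lt_trichotomy (u k) (γ * gradient g u k + γ * w k) with hhi | hhi | hhi
  · by_cases hq : γ * gradient g u k + γ * w k < 0
    · obtain ⟨h₁, h₂, h₃⟩ := hIp (Or.inr ⟨hlo, hhi, hq⟩)
      exact eventually_abs_clamp_le_of_complementarity_upper hc.le hlo
        (Or.inr ⟨by linarith, hq.le⟩) h₁ h₂ h₃
    by_cases hq' : 0 < γ * gradient g u k - γ * w k
    · obtain ⟨h₁, h₂, h₃⟩ := hIm (Or.inr ⟨hq', hlo, hhi⟩)
      exact eventually_abs_clamp_le_of_complementarity_lower hc.le hhi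
        (Or.inr ⟨by linarith, hq'.le⟩) h₁ h₂ h₃
    · exact eventually_abs_clamp_le_of_mem_Ioo hlo hhi
        (hI ⟨⟨hlo, hhi⟩, by rintro (h | h); exacts [hq h.2.2, hq' h.1]⟩)
  · obtain ⟨h₁, h₂, h₃⟩ := hIp (Or.inl (Or.inl hhi))
    exact eventually_abs_clamp_le_of_complementarity_upper hc.le hlo (Or.inl hhi) h₁ h₂ h₃
  · by_cases hp : u k < 0
    · obtain ⟨h₁, h₂, h₃⟩ := hIp (Or.inl (Or.inr ⟨hhi, hp⟩))
      exact eventually_abs_clamp_le_of_complementarity_upper hc.le hlo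
        (Or.inr ⟨hp.le, by linarith⟩) h₁ h₂ h₃
    · exact eventually_abs_clamp_le_of_add_lt hc.le hhi (hA (Or.inl ⟨hhi, fun h => hp h.2⟩))

lemma norm_Fm_add_smul_le (hc : ∀ k, 0 ≤ γ * w k) {t : ℝ} (ht : t ≤ 1)
    (hlin : ∀ k, |clamp (γ * gradient g u k + t * (γ * hess g u d k)) (γ * w k)
      (u k + t * d k)| ≤ (1 - t) * |Fm g γ w u k|) :
    ‖Fm g γ w (u + t • d)‖ ≤ (1 - t) * ‖Fm g γ w u‖
      + ‖γ • (gradient g (u + t • d) - gradient g u - t • hess g u d)‖ := by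
  let L : Euc n := WithLp.toLp 2 fun k =>
    clamp (γ * gradient g u k + t * (γ * hess g u d k)) (γ * w k) (u k + t * d k)
  have hL : ‖L‖ ≤ ‖(1 - t) • Fm g γ w u‖ := EuclideanSpace.norm_le_norm_of_abs_le fun k => by
    simpa [L, abs_mul, abs_of_nonneg (sub_nonneg.2 ht)] using hlin k
  have hR : ‖Fm g γ w (u + t • d) - L‖
      ≤ ‖γ • (gradient g (u + t • d) - gradient g u - t • hess g u d)‖ :=
    EuclideanSpace.norm_le_norm_of_abs_le fun k => by
      rw [PiLp.sub_apply, Fm_apply g _ k (hc k)]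
      convert abs_clamp_sub_clamp_le (γ * gradient g (u + t • d) k)
        (γ * gradient g u k + t * (γ * hess g u d k)) (γ * w k) (u k + t * d k) using 2
      · simp [L]
      · simp only [PiLp.smul_apply, PiLp.sub_apply, smul_eq_mul]; ring
  calc ‖Fm g γ w (u + t • d)‖ ≤ ‖L‖ + ‖Fm g γ w (u + t • d) - L‖ :=
        norm_le_norm_add_norm_sub' _ _
    _ ≤ _ := by
      rw [norm_smul, Real.norm_eq_abs, abs_of_nonneg (sub_nonneg.2 ht)] at hL
      exact add_le_add hL hR

lemma IsModDir.eventually_Th_le (hg : ContDiff ℝ 2 g) (hw : ∀ k, 0 < w k) (hγ : 0 < γ)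
    {σ : ℝ} (hσ : σ < 1 / 2) (hpos : 0 < Th g γ w u) (hd : IsModDir g γ w u d) :
    ∀ᶠ t in 𝓝[>] 0, Th g γ w (u + t • d) ≤ (1 - 2 * σ * t) * Th g γ w u := by
  have hc : ∀ k, 0 < γ * w k := fun k => mul_pos hγ (hw k)
  have hdec : ∀ᶠ t in 𝓝[>] 0, ‖Fm g γ w (u + t • d)‖ ≤ (1 - t) * ‖Fm g γ w u‖
      + ‖γ • (gradient g (u + t • d) - gradient g u - t • hess g u d)‖ := by
    filter_upwards [eventually_all.2 fun k => hd.eventually_abs_clamp_le (hc k),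
      Ioo_mem_nhdsGT one_pos] with t hlin ⟨_, ht⟩
    exact norm_Fm_add_smul_le (fun k => (hc k).le) ht.le hlin
  have hR := hasDerivAt_iff_isLittleO_nhds_zero.1 (hg.hasDerivAt_gradient_line u d)
  simp only [zero_add, zero_smul, add_zero] at hR
  have ha : 0 < ‖Fm g γ w u‖ := norm_pos_iff.2 fun h => by simp [Th, h] at hpos
  simpa only [Th] using eventually_sq_le_of_le_one_sub_mul_add_isLittleO ha hσ
    (fun _ => norm_nonneg _) hdec ((hR.const_smul_left γ).norm_left.mono nhdsWithin_le_nhds)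

end ModifiedNewton

theorem stmt9_general {n : ℕ} (c₁ c₂ : ℝ) (g : Euc n → ℝ) (hg : Assump n g c₁ c₂)
    (w : Fin n → ℝ) (hw : ∀ k, 0 < w k) (γ : ℝ) (hγ : 0 < γ)
    (β σ : ℝ) (hβ : β ∈ Set.Ioo (0 : ℝ) 1) (hσ : σ ∈ Set.Ioo (0 : ℝ) (1 / 2))
    (u d : Euc n) (hpos : 0 < Th g γ w u) (hd : IsModDir g γ w u d) :
    ∃ l : ℕ, Th g γ w (u + (β ^ l) • d) ≤ (1 - 2 * σ * β ^ l) * Th g γ w u :=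
  ((tendsto_pow_atTop_nhdsWithin_zero_of_lt_one hβ.1 hβ.2).eventually
    (hd.eventually_Th_le hg.contDiff hw hγ hσ.2 hpos)).exists

/-- the Armijo stepsize is found after finitely many trials. -/
theorem stmt9 {n : ℕ} (hn : 1 ≤ n) (c₁ c₂ : ℝ) (g : Euc n → ℝ) (hg : Assump n g c₁ c₂)
    (w : Fin n → ℝ) (hw : ∀ k, 0 < w k) (γ : ℝ) (hγ : 0 < γ)
    (β σ : ℝ) (hβ : β ∈ Set.Ioo (0 : ℝ) 1) (hσ : σ ∈ Set.Ioo (0 : ℝ) (1 / 2))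
    (u d : Euc n) (hpos : 0 < Th g γ w u) (hd : IsModDir g γ w u d) :
    ∃ l : ℕ, Th g γ w (u + (β ^ l) • d) ≤ (1 - 2 * σ * β ^ l) * Th g γ w u :=
  stmt9_general c₁ c₂ g hg w hw γ hγ β σ hβ hσ u d hpos hd
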